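/- Let (X,d) be a metric space, let p ≥ 1 be a real number, and let k ≥ 1 be an integer. Then for all finitely supported probability measures μ, ν on X, W_p^p(μ,ν) ≤ 3^{p−1}·OT^L(μ,ν); equivalently, W_p(μ,ν) ≤ 3^{1−1/p}·W_p^L(μ,ν), so the p-Wasserstein distance is bounded above by a constant multiple of the latent Wasserstein discrepancy. -/

import Mathlib

open scoped BigOperators

/-- A finitely supported probability measure on `X`, given by its weight
function (nonnegative, finite support, total mass one). -/
structure FinProb (X : Type*) where
  w : X → ℝ
  nonneg : ∀ x, 0 ≤ w x
  finite : (Function.support w).Finite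
  total : ∑ᶠ x, w x = 1

variable {X : Type*} [MetricSpace X]

/-- `P` is a coupling of `α` and `β`: entrywise nonnegative, finitely
supported, with row marginals `α` and column marginals `β`. -/
def IsCoupling (α β : FinProb X) (P : X → X → ℝ) : Prop :=
  (∀ x y, 0 ≤ P x y) ∧ (Function.support (Function.uncurry P)).Finite ∧
  (∀ x, ∑ᶠ y, P x y = α.w x) ∧ (∀ y, ∑ᶠ x, P x y = β.w y)

/-- The transport cost `Σ_{x,y} d(x,y)^p · P x y` of a plan `P` (real exponent `p`). -/
noncomputable def transportCost (p : ℝ) (P : X → X → ℝ) : ℝ :=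
  ∑ᶠ x, ∑ᶠ y, dist x y ^ p * P x y

/-- `W_p^p(α,β)`: the optimal transport cost with ground cost `d^p` between
finitely supported probability measures. -/
noncomputable def Wpp (p : ℝ) (α β : FinProb X) : ℝ :=
  sInf {c : ℝ | ∃ P : X → X → ℝ, IsCoupling α β P ∧ c = transportCost p P}

/-- The latent optimal transport cost with (at most) `k` anchors on each side:
`OT^L(μ,ν) = inf { W_p^p(μ,μ_z) + W_p^p(μ_z,ν_z) + W_p^p(ν_z,ν) }`, the infimum
over finitely supported probability measures `μ_z, ν_z` supported on at most
`k` points. -/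
noncomputable def OTL (p : ℝ) (k : ℕ) (μ ν : FinProb X) : ℝ :=
  sInf {c : ℝ | ∃ μz νz : FinProb X,
    μz.finite.toFinset.card ≤ k ∧ νz.finite.toFinset.card ≤ k ∧
    c = Wpp p μ μz + Wpp p μz νz + Wpp p νz ν}

/-- The latent Wasserstein discrepancy `W_p^L := (OT^L)^(1/p)`. -/
noncomputable def WpL (p : ℝ) (k : ℕ) (μ ν : FinProb X) : ℝ :=
  OTL p k μ ν ^ (1 / p)

/-!
Glue couplings along their common marginal: composing a coupling `P` of `(α, β)` with the
disintegration `z ↦ Q z · / β z` of a coupling `Q` of `(β, γ)` gives a coupling of `(α, γ)`.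
The triangle inequality together with the convexity bound
`(s + t)^p ≤ a^(p-1) s^p + b^(p-1) t^p` for `a⁻¹ + b⁻¹ = 1` then gives
`W_p^p(α, γ) ≤ a^(p-1) W_p^p(α, β) + b^(p-1) W_p^p(β, γ)`. Using it with `(a, b) = (2, 2)` on
`μ → μ_z → ν_z` and with `(3/2, 3)` on `μ → ν_z → ν` produces the factor
`(3/2)^(p-1) 2^(p-1) = 3^(p-1)`; the second claim is the `p`-th root of the first.
-/

open Finset

section Coupling

variable {X : Type*}

namespace FinProb

noncomputable def supp (α : FinProb X) : Finset X := α.finite.toFinset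

@[simp] lemma mem_supp {α : FinProb X} {x : X} : x ∈ α.supp ↔ α.w x ≠ 0 :=
  α.finite.mem_toFinset

lemma sum_supp (α : FinProb X) : ∑ x ∈ α.supp, α.w x = 1 := by
  rw [← α.total, finsum_eq_sum_of_support_subset _ (s := α.supp) (fun x hx => by simpa using hx)]

lemma nonempty (α : FinProb X) : Nonempty X := by
  by_contra h
  rw [not_nonempty_iff] at h
  simpa [finsum_eq_zero_of_forall_eq_zero fun x : X => (IsEmpty.false x).elim] using α.total

open Classical in
noncomputable def dirac (x₀ : X) : FinProb X where
  w := Pi.single x₀ 1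
  nonneg x := by by_cases h : x = x₀ <;> simp [h]
  finite := by rw [Pi.support_single_of_ne one_ne_zero]; exact Set.finite_singleton x₀
  total := by rw [finsum_eq_single _ x₀ (fun x hx => Pi.single_eq_of_ne hx 1)]; simp

lemma card_supp_dirac (x₀ : X) : (dirac x₀).supp.card = 1 := by
  classical
  rw [Finset.card_eq_one]
  exact ⟨x₀, by ext x; by_cases h : x = x₀ <;> simp [dirac, h]⟩

/-- Gluing along the common marginal `β`: the composition of `P` with the Markov kernel
`z ↦ Q z · / β z` obtained by disintegrating `Q`. -/
noncomputable def glue (β : FinProb X) (P Q : X → X → ℝ) (x y : X) : ℝ :=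
  ∑ z ∈ β.supp, P x z * (Q z y / β.w z)

end FinProb

namespace IsCoupling

variable {α β γ : FinProb X} {P Q : X → X → ℝ}

lemma eq_zero_of_left (hP : IsCoupling α β P) {x : X} (hx : α.w x = 0) (y : X) :
    P x y = 0 := by
  have hle : P x y ≤ ∑ᶠ y', P x y' :=
    single_le_finsum y ((hP.2.1.image Prod.snd).subset fun y' hy' => ⟨(x, y'), hy', rfl⟩)
      (hP.1 x)
  rw [hP.2.2.1 x, hx] at hle
  exact le_antisymm hle (hP.1 x y)

lemma eq_zero_of_right (hP : IsCoupling α β P) {y : X} (hy : β.w y = 0) (x : X) :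
    P x y = 0 := by
  have hle : P x y ≤ ∑ᶠ x', P x' y :=
    single_le_finsum x ((hP.2.1.image Prod.fst).subset fun x' hx' => ⟨(x', y), hx', rfl⟩)
      (fun x' => hP.1 x' y)
  rw [hP.2.2.2 y, hy] at hle
  exact le_antisymm hle (hP.1 x y)

lemma mem_supp_of_ne_zero (hP : IsCoupling α β P) {x y : X} (hxy : P x y ≠ 0) :
    x ∈ α.supp ∧ y ∈ β.supp :=
  ⟨FinProb.mem_supp.2 fun hx => hxy (hP.eq_zero_of_left hx y),
    FinProb.mem_supp.2 fun hy => hxy (hP.eq_zero_of_right hy x)⟩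

lemma sum_right (hP : IsCoupling α β P) (x : X) : ∑ y ∈ β.supp, P x y = α.w x := by
  rw [← hP.2.2.1 x, finsum_eq_sum_of_support_subset]
  exact fun y hy => (hP.mem_supp_of_ne_zero hy).2

lemma sum_left (hP : IsCoupling α β P) (y : X) : ∑ x ∈ α.supp, P x y = β.w y := by
  rw [← hP.2.2.2 y, finsum_eq_sum_of_support_subset]
  exact fun x hx => (hP.mem_supp_of_ne_zero hx).1

lemma of_sum_supp (hnonneg : ∀ x y, 0 ≤ P x y)
    (hsupp : ∀ x y, P x y ≠ 0 → x ∈ α.supp ∧ y ∈ β.supp)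
    (hright : ∀ x, ∑ y ∈ β.supp, P x y = α.w x) (hleft : ∀ y, ∑ x ∈ α.supp, P x y = β.w y) :
    IsCoupling α β P := by
  refine ⟨hnonneg, ?_, fun x => ?_, fun y => ?_⟩
  · refine (α.supp ×ˢ β.supp).finite_toSet.subset ?_
    rintro ⟨x, y⟩ hxy
    simpa using hsupp x y hxy
  · rw [← hright x, finsum_eq_sum_of_support_subset]
    exact fun y hy => (hsupp x y hy).2
  · rw [← hleft y, finsum_eq_sum_of_support_subset]
    exact fun x hx => (hsupp x y hx).1

lemma prod (α β : FinProb X) : IsCoupling α β (fun x y => α.w x * β.w y) := by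
  refine of_sum_supp (fun x y => mul_nonneg (α.nonneg x) (β.nonneg y)) (fun x y hxy => ?_)
    (fun x => by rw [← mul_sum, β.sum_supp, mul_one])
    (fun y => by rw [← sum_mul, α.sum_supp, one_mul])
  simpa [not_or] using hxy

lemma sum_right_div (hQ : IsCoupling β γ Q) {z : X} (hz : z ∈ β.supp) :
    ∑ y ∈ γ.supp, Q z y / β.w z = 1 := by
  rw [← sum_div, hQ.sum_right, div_self (FinProb.mem_supp.1 hz)]

lemma glue (hP : IsCoupling α β P) (hQ : IsCoupling β γ Q) : IsCoupling α γ (β.glue P Q) := by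
  refine of_sum_supp (fun x y => sum_nonneg fun z _ =>
      mul_nonneg (hP.1 x z) (div_nonneg (hQ.1 z y) (β.nonneg z))) (fun x y hxy => ?_)
    (fun x => ?_) (fun y => ?_)
  · obtain ⟨z, -, hz⟩ := exists_ne_zero_of_sum_ne_zero hxy
    exact ⟨(hP.mem_supp_of_ne_zero (left_ne_zero_of_mul hz)).1,
      (hQ.mem_supp_of_ne_zero (left_ne_zero_of_mul (right_ne_zero_of_mul hz))).2⟩
  · simp only [FinProb.glue]
    rw [sum_comm]
    simp_rw [← mul_sum]
    rw [← hP.sum_right x]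
    exact sum_congr rfl fun z hz => by rw [hQ.sum_right_div hz, mul_one]
  · simp only [FinProb.glue]
    rw [sum_comm]
    simp_rw [← sum_mul, hP.sum_left]
    rw [← hQ.sum_left y]
    exact sum_congr rfl fun z hz => mul_div_cancel₀ _ (FinProb.mem_supp.1 hz)

end IsCoupling

end Coupling

open scoped Pointwise in
lemma le_mul_sInf_add {S : Set ℝ} (hS : S.Nonempty) {a c d : ℝ} (ha : 0 ≤ a)
    (h : ∀ s ∈ S, c ≤ a * s + d) : c ≤ a * sInf S + d := by
  have : c - d ≤ sInf (a • S) :=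
    le_csInf hS.smul_set (by rintro _ ⟨s, hs, rfl⟩; linarith [h s hs, smul_eq_mul a s])
  rw [Real.sInf_smul_of_nonneg ha, smul_eq_mul] at this
  linarith

lemma add_rpow_le_rpow_mul_add {p a b x y : ℝ} (hp : 1 ≤ p) (ha : 0 < a) (hb : 0 < b)
    (hab : a⁻¹ + b⁻¹ = 1) (hx : 0 ≤ x) (hy : 0 ≤ y) :
    (x + y) ^ p ≤ a ^ (p - 1) * x ^ p + b ^ (p - 1) * y ^ p := by
  have hconv := (convexOn_rpow hp).2 (Set.mem_Ici.2 (mul_nonneg ha.le hx))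
    (Set.mem_Ici.2 (mul_nonneg hb.le hy)) (inv_nonneg.2 ha.le) (inv_nonneg.2 hb.le) hab
  simp only [smul_eq_mul, inv_mul_cancel_left₀ ha.ne', inv_mul_cancel_left₀ hb.ne'] at hconv
  rwa [Real.mul_rpow ha.le hx, Real.mul_rpow hb.le hy, ← mul_assoc, ← mul_assoc,
    ← Real.rpow_neg_one, ← Real.rpow_neg_one, ← Real.rpow_add ha, ← Real.rpow_add hb,
    neg_add_eq_sub] at hconv

section Transport

variable {α β γ : FinProb X} {P Q : X → X → ℝ} {p : ℝ}

lemma transportCost_nonneg (hP : ∀ x y, 0 ≤ P x y) : 0 ≤ transportCost p P :=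
  finsum_nonneg fun x => finsum_nonneg fun y =>
    mul_nonneg (Real.rpow_nonneg dist_nonneg p) (hP x y)

lemma IsCoupling.transportCost_eq (hP : IsCoupling α β P) :
    transportCost p P = ∑ x ∈ α.supp, ∑ y ∈ β.supp, dist x y ^ p * P x y := by
  have hsupp {x y : X} (hxy : dist x y ^ p * P x y ≠ 0) := hP.mem_supp_of_ne_zero
    (right_ne_zero_of_mul hxy)
  rw [transportCost, finsum_congr fun x => finsum_eq_sum_of_support_subset _ (s := β.supp)
    fun y hy => (hsupp hy).2, finsum_eq_sum_of_support_subset]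
  intro x hx
  obtain ⟨y, -, hy⟩ := exists_ne_zero_of_sum_ne_zero hx
  exact (hsupp hy).1

lemma IsCoupling.transportCost_glue_le (hP : IsCoupling α β P) (hQ : IsCoupling β γ Q)
    {a b : ℝ} (hcost : ∀ x z y : X, dist x y ^ p ≤ a * dist x z ^ p + b * dist z y ^ p) :
    transportCost p (β.glue P Q) ≤ a * transportCost p P + b * transportCost p Q := by
  have first : ∑ x ∈ α.supp, ∑ y ∈ γ.supp, ∑ z ∈ β.supp,
      dist x z ^ p * (P x z * (Q z y / β.w z)) =
      ∑ x ∈ α.supp, ∑ z ∈ β.supp, dist x z ^ p * P x z :=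
    sum_congr rfl fun x _ => by
      rw [sum_comm]
      exact sum_congr rfl fun z hz => by rw [← mul_sum, ← mul_sum, hQ.sum_right_div hz, mul_one]
  have second : ∑ x ∈ α.supp, ∑ y ∈ γ.supp, ∑ z ∈ β.supp,
      dist z y ^ p * (P x z * (Q z y / β.w z)) =
      ∑ z ∈ β.supp, ∑ y ∈ γ.supp, dist z y ^ p * Q z y := by
    rw [sum_congr rfl fun x _ => sum_comm, sum_comm]
    refine sum_congr rfl fun z hz => ?_
    rw [sum_comm]
    refine sum_congr rfl fun y _ => ?_
    simp_rw [mul_left_comm (dist z y ^ p) (P _ z)]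
    rw [← sum_mul, hP.sum_left, mul_left_comm, mul_div_cancel₀ _ (FinProb.mem_supp.1 hz)]
  rw [(hP.glue hQ).transportCost_eq, hP.transportCost_eq, hQ.transportCost_eq]
  calc ∑ x ∈ α.supp, ∑ y ∈ γ.supp, dist x y ^ p * β.glue P Q x y
      = ∑ x ∈ α.supp, ∑ y ∈ γ.supp, ∑ z ∈ β.supp,
          dist x y ^ p * (P x z * (Q z y / β.w z)) := by simp only [FinProb.glue, mul_sum]
    _ ≤ ∑ x ∈ α.supp, ∑ y ∈ γ.supp, ∑ z ∈ β.supp,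
          (a * dist x z ^ p + b * dist z y ^ p) * (P x z * (Q z y / β.w z)) := by
        gcongr with x _ y _ z _
        · exact mul_nonneg (hP.1 x z) (div_nonneg (hQ.1 z y) (β.nonneg z))
        · exact hcost x z y
    _ = a * ∑ x ∈ α.supp, ∑ z ∈ β.supp, dist x z ^ p * P x z +
          b * ∑ z ∈ β.supp, ∑ y ∈ γ.supp, dist z y ^ p * Q z y := by
        simp only [add_mul, mul_assoc, sum_add_distrib, ← mul_sum, first, second]

lemma Wpp_nonneg : 0 ≤ Wpp p α β :=
  Real.sInf_nonneg <| by rintro _ ⟨P, hP, rfl⟩; exact transportCost_nonneg hP.1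

lemma IsCoupling.Wpp_le (hP : IsCoupling α β P) : Wpp p α β ≤ transportCost p P :=
  csInf_le ⟨0, by rintro _ ⟨P, hP, rfl⟩; exact transportCost_nonneg hP.1⟩ ⟨P, hP, rfl⟩

lemma le_mul_Wpp_add {a c d : ℝ} (ha : 0 ≤ a)
    (h : ∀ P, IsCoupling α β P → c ≤ a * transportCost p P + d) : c ≤ a * Wpp p α β + d := by
  unfold Wpp
  refine le_mul_sInf_add ?_ ha ?_
  · exact ⟨_, _, IsCoupling.prod α β, rfl⟩
  rintro _ ⟨P, hP, rfl⟩
  exact h P hP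

lemma Wpp_le_mul_add_mul {a b : ℝ} (ha : 0 ≤ a) (hb : 0 ≤ b)
    (hcost : ∀ x z y : X, dist x y ^ p ≤ a * dist x z ^ p + b * dist z y ^ p) :
    Wpp p α γ ≤ a * Wpp p α β + b * Wpp p β γ := by
  refine le_mul_Wpp_add ha fun P hP => ?_
  rw [add_comm]
  refine le_mul_Wpp_add hb fun Q hQ => ?_
  linarith [(hP.glue hQ).Wpp_le (p := p), hP.transportCost_glue_le hQ hcost]

lemma Wpp_le_rpow_mul_add (hp : 1 ≤ p) {a b : ℝ} (ha : 0 < a) (hb : 0 < b)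
    (hab : a⁻¹ + b⁻¹ = 1) :
    Wpp p α γ ≤ a ^ (p - 1) * Wpp p α β + b ^ (p - 1) * Wpp p β γ :=
  Wpp_le_mul_add_mul (by positivity) (by positivity) fun x z y =>
    (Real.rpow_le_rpow dist_nonneg (dist_triangle x z y) (by linarith)).trans
      (add_rpow_le_rpow_mul_add hp ha hb hab dist_nonneg dist_nonneg)

lemma Wpp_le_three_rpow_mul (hp : 1 ≤ p) (μ ν μz νz : FinProb X) :
    Wpp p μ ν ≤ 3 ^ (p - 1) * (Wpp p μ μz + Wpp p μz νz + Wpp p νz ν) := by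
  have hμνz : Wpp p μ νz ≤ 2 ^ (p - 1) * (Wpp p μ μz + Wpp p μz νz) := by
    linarith [Wpp_le_rpow_mul_add (p := p) (α := μ) (β := μz) (γ := νz) hp two_pos two_pos
      (by norm_num)]
  have h32 : (3 / 2 : ℝ) ^ (p - 1) * 2 ^ (p - 1) = 3 ^ (p - 1) := by
    rw [← Real.mul_rpow (by norm_num) (by norm_num)]
    norm_num
  calc Wpp p μ ν ≤ (3 / 2) ^ (p - 1) * Wpp p μ νz + 3 ^ (p - 1) * Wpp p νz ν :=
        Wpp_le_rpow_mul_add hp (by norm_num) (by norm_num) (by norm_num)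
    _ ≤ (3 / 2) ^ (p - 1) * (2 ^ (p - 1) * (Wpp p μ μz + Wpp p μz νz)) +
          3 ^ (p - 1) * Wpp p νz ν := by gcongr
    _ = 3 ^ (p - 1) * (Wpp p μ μz + Wpp p μz νz + Wpp p νz ν) := by
        rw [← mul_assoc, h32]
        ring

lemma OTL_nonneg (k : ℕ) (μ ν : FinProb X) : 0 ≤ OTL p k μ ν :=
  Real.sInf_nonneg <| by
    rintro _ ⟨μz, νz, -, -, rfl⟩
    linarith [Wpp_nonneg (p := p) (α := μ) (β := μz), Wpp_nonneg (p := p) (α := μz) (β := νz),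
      Wpp_nonneg (p := p) (α := νz) (β := ν)]

end Transport

/-- The Wasserstein cost is bounded by a constant multiple of the latent
optimal transport cost: `W_p^p(μ,ν) ≤ 3^(p−1)·OT^L(μ,ν)`; equivalently
`W_p(μ,ν) ≤ 3^(1−1/p)·W_p^L(μ,ν)`. -/
theorem wasserstein_le_latent (p : ℝ) (hp : 1 ≤ p) (k : ℕ) (hk : 1 ≤ k)
    (μ ν : FinProb X) :
    Wpp p μ ν ≤ (3 : ℝ) ^ (p - 1) * OTL p k μ ν ∧
    Wpp p μ ν ^ (1 / p) ≤ (3 : ℝ) ^ (1 - 1 / p) * WpL p k μ ν := by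
  have h3 : (0 : ℝ) ≤ 3 ^ (p - 1) := by positivity
  obtain ⟨x₀⟩ := μ.nonempty
  -- Without an admissible pair of anchors `OTL` would be the junk value `sInf ∅ = 0`.
  have hdirac : (FinProb.dirac x₀).supp.card ≤ k := (FinProb.card_supp_dirac x₀).trans_le hk
  have hOTL : Wpp p μ ν ≤ 3 ^ (p - 1) * OTL p k μ ν := by
    unfold OTL
    refine (le_mul_sInf_add ?_ h3 (d := 0) ?_).trans_eq (add_zero _)
    · exact ⟨_, _, _, hdirac, hdirac, rfl⟩
    rintro _ ⟨μz, νz, -, -, rfl⟩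
    simpa using Wpp_le_three_rpow_mul hp μ ν μz νz
  refine ⟨hOTL, ?_⟩
  calc Wpp p μ ν ^ (1 / p) ≤ (3 ^ (p - 1) * OTL p k μ ν) ^ (1 / p) :=
        Real.rpow_le_rpow Wpp_nonneg hOTL (by positivity)
    _ = 3 ^ (1 - 1 / p) * WpL p k μ ν := by
        rw [Real.mul_rpow h3 (OTL_nonneg k μ ν), ← Real.rpow_mul (by norm_num), WpL]
        congr 2
        field_simp
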